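/- Let n be a squarefree integer with n ≠ 1, and let a₁, a₂ be coprime positive integers such that a₁a₂ + n = x² for some integer x. For i = 1, 2, let 𝔞ᵢ be the integral ideal of the ring of integers of ℚ(√n) generated by aᵢ and x + √n. Then 𝒩(𝔞ᵢ) = aᵢ for i = 1, 2, and the product 𝔞₁𝔞₂ is a principal ideal. -/

import Mathlib

/-!
Put `β = x + √n`. The hypothesis reads `β (x - √n) = a₁a₂`, so `⟨a₁, β⟩⟨a₂, β⟩`, which is
generated by `a₁a₂, a₁β, a₂β, β²`, lies in `⟨β⟩`, and it contains `β` because `a₁, a₂` are coprime: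
the product is `⟨β⟩`. As `n` is not a square, `𝒩⟨β⟩ = |x² - n| = a₁a₂`. Each `𝒩⟨aᵢ, β⟩` divides
`𝒩⟨aᵢ⟩ = aᵢ²`, and coprimality of `a₁, a₂` then forces `𝒩⟨aᵢ, β⟩ = aᵢ`.
-/

open NumberField Module

theorem Squarefree.isUnit_of_isSquare {R : Type*} [CommMonoid R] {r : R} (hr : Squarefree r)
    (hsq : IsSquare r) : IsUnit r := by
  obtain ⟨m, rfl⟩ := hsq
  exact (hr m dvd_rfl).mul (hr m dvd_rfl)

theorem Int.not_isSquare_of_squarefree_of_ne_one {n : ℤ} (hsf : Squarefree n) (hn : n ≠ 1) :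
    ¬ IsSquare n := by
  intro hsq
  rcases Int.isUnit_iff.mp (hsf.isUnit_of_isSquare hsq) with rfl | rfl
  · exact hn rfl
  · obtain ⟨m, hm⟩ := hsq
    nlinarith [mul_self_nonneg m]

theorem linearIndependent_one_of_sq_eq {F L : Type*} [Field F] [CommRing L] [Nontrivial L]
    [Algebra F L] {c : F} (hc : ¬ IsSquare c) {s : L} (hs : s ^ 2 = algebraMap F L c) :
    LinearIndependent F ![1, s] := by
  rw [LinearIndependent.pair_iff]
  intro a b hab
  obtain rfl | hb := eq_or_ne b 0
  · simpa using hab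
  refine absurd ⟨-a / b, (algebraMap F L).injective ?_⟩ hc
  have hbs : algebraMap F L b * s = algebraMap F L (-a) := by
    rw [Algebra.smul_def, Algebra.smul_def, mul_one] at hab
    linear_combination (map_neg (algebraMap F L) a).symm + hab
  have hs' : s = algebraMap F L (-a / b) := by
    rw [div_eq_inv_mul, map_mul, ← hbs, ← mul_assoc, ← map_mul, inv_mul_cancel₀ hb, map_one,
      one_mul]
  rw [← hs, hs', ← map_pow, sq]

theorem Algebra.norm_algebraMap_add_of_sq_eq {F L : Type*} [Field F] [CommRing L] [Algebra F L]
    (hL : finrank F L = 2) {c : F} (hc : ¬ IsSquare c) {s : L} (hs : s ^ 2 = algebraMap F L c)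
    (x : F) : Algebra.norm F (algebraMap F L x + s) = x ^ 2 - c := by
  have : Nontrivial L := Module.nontrivial_of_finrank_eq_succ (R := F) hL
  have li : LinearIndependent F ![1, s] := linearIndependent_one_of_sq_eq hc hs
  let B := basisOfLinearIndependentOfCardEqFinrank li (by simp [hL])
  have hB : ⇑B = ![1, s] := coe_basisOfLinearIndependentOfCardEqFinrank _ _
  have h0 : (algebraMap F L x + s) * B 0 = x • B 0 + (1 : F) • B 1 := by
    simp [hB, Algebra.smul_def]
  have h1 : (algebraMap F L x + s) * B 1 = c • B 0 + x • B 1 := by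
    simp only [hB, Matrix.cons_val_zero, Matrix.cons_val_one, Algebra.smul_def, mul_one]
    linear_combination hs
  rw [Algebra.norm_eq_matrix_det B, Matrix.det_fin_two]
  simp [Algebra.leftMulMatrix_eq_repr_mul, h0, h1, sq]

theorem Nat.Coprime.eq_of_dvd_sq_of_mul_eq {a b d e : ℕ} (hab : a.Coprime b) (hd : d ∣ a ^ 2)
    (he : e ∣ b ^ 2) (h : d * e = a * b) : d = a ∧ e = b := by
  have hda : d ∣ a := by
    simpa [sq, Nat.gcd_mul_left, hab] using Nat.dvd_gcd hd (Dvd.intro e h)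
  have heb : e ∣ b := by
    simpa [sq, Nat.gcd_mul_left, hab.symm] using
      Nat.dvd_gcd he (Dvd.intro_left d (h.trans (mul_comm a b)))
  refine ⟨Nat.dvd_antisymm hda ?_, Nat.dvd_antisymm heb ?_⟩
  · exact (hab.coprime_dvd_right heb).dvd_of_dvd_mul_right (Dvd.intro b h.symm)
  · exact (hab.symm.coprime_dvd_right hda).dvd_of_dvd_mul_left (Dvd.intro_left a h.symm)

theorem Ideal.span_pair_mul_span_pair_eq_span_singleton {R : Type*} [CommRing R] {a b β γ : R}
    (hab : IsCoprime a b) (h : β * γ = a * b) :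
    span {a, β} * span {b, β} = span {β} := by
  refine le_antisymm ?_ ?_
  · simp only [span_pair_mul_span_pair, span_le, Set.insert_subset_iff, Set.singleton_subset_iff,
      SetLike.mem_coe, mem_span_singleton]
    exact ⟨⟨γ, h.symm⟩, dvd_mul_left β a, dvd_mul_right β b, dvd_mul_right β β⟩
  · obtain ⟨u, v, huv⟩ := hab
    have hmem : u * (a * β) + v * (β * b) ∈ span {a, β} * span {b, β} :=
      add_mem (mul_mem_left _ _ (mul_mem_mul (subset_span (by simp)) (subset_span (by simp))))
        (mul_mem_left _ _ (mul_mem_mul (subset_span (by simp)) (subset_span (by simp))))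
    rw [span_singleton_le_iff_mem]
    convert hmem using 1
    linear_combination -β * huv

theorem Ideal.absNorm_dvd_of_natCast_mem {S : Type*} [CommRing S] [IsDedekindDomain S]
    [Module.Free ℤ S] [Module.Finite ℤ S] {I : Ideal S} {a : ℕ} (ha : (a : S) ∈ I) :
    absNorm I ∣ a ^ finrank ℤ S := by
  rw [← absNorm_span_natCast]
  exact absNorm_dvd_absNorm_of_le ((span_singleton_le_iff_mem I).mpr ha)

theorem NumberField.RingOfIntegers.norm_intCast_add_of_sq_eq {K : Type*} [Field K] [NumberField K]
    (hK : finrank ℚ K = 2) {n : ℤ} (hn : ¬ IsSquare n) {σ : 𝓞 K} (hσ : σ ^ 2 = n) (x : ℤ) :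
    Algebra.norm ℤ ((x : 𝓞 K) + σ) = x ^ 2 - n := by
  have hσK : (σ : K) ^ 2 = algebraMap ℚ K n := by simpa using congrArg ((↑) : 𝓞 K → K) hσ
  have := Algebra.norm_algebraMap_add_of_sq_eq hK (by rwa [Rat.isSquare_intCast_iff]) hσK x
  apply Int.cast_injective (α := ℚ)
  rw [Algebra.coe_norm_int]
  simpa using this

theorem norm_of_explicit_ideals_of_diophantine_pair_general
    (n : ℤ) (hsf : Squarefree n) (hn : n ≠ 1)
    (K : Type*) [Field K] [NumberField K] (hK : finrank ℚ K = 2)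
    (σ : 𝓞 K) (hσ : σ ^ 2 = (n : 𝓞 K))
    (a₁ a₂ : ℕ) (hcop : Nat.Coprime a₁ a₂)
    (x : ℤ) (hx : (a₁ : ℤ) * a₂ + n = x ^ 2) :
    Ideal.absNorm (Ideal.span {(a₁ : 𝓞 K), (x : 𝓞 K) + σ}) = a₁ ∧
    Ideal.absNorm (Ideal.span {(a₂ : 𝓞 K), (x : 𝓞 K) + σ}) = a₂ ∧
    (Ideal.span {(a₁ : 𝓞 K), (x : 𝓞 K) + σ} *
      Ideal.span {(a₂ : 𝓞 K), (x : 𝓞 K) + σ}).IsPrincipal := by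
  set β : 𝓞 K := (x : 𝓞 K) + σ
  have hβ : β * ((x : 𝓞 K) - σ) = a₁ * a₂ := by
    have := congrArg ((↑) : ℤ → 𝓞 K) hx
    push_cast at this
    linear_combination -this - hσ
  have hcop' : IsCoprime (a₁ : 𝓞 K) a₂ := by
    simpa using (Nat.isCoprime_iff_coprime.mpr hcop).map (Int.castRingHom (𝓞 K))
  have hprod := Ideal.span_pair_mul_span_pair_eq_span_singleton hcop' hβ
  have hnorm : Ideal.absNorm (Ideal.span {(a₁ : 𝓞 K), β}) *
      Ideal.absNorm (Ideal.span {(a₂ : 𝓞 K), β}) = a₁ * a₂ := by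
    rw [← map_mul, hprod, Ideal.absNorm_span_singleton, RingOfIntegers.norm_intCast_add_of_sq_eq
      hK (Int.not_isSquare_of_squarefree_of_ne_one hsf hn) hσ, ← hx, add_sub_cancel_right]
    simp [Int.natAbs_mul]
  have hrank : finrank ℤ (𝓞 K) = 2 := (RingOfIntegers.rank K).trans hK
  obtain ⟨h₁, h₂⟩ := hcop.eq_of_dvd_sq_of_mul_eq
    (hrank ▸ Ideal.absNorm_dvd_of_natCast_mem (Ideal.subset_span (by simp)))
    (hrank ▸ Ideal.absNorm_dvd_of_natCast_mem (Ideal.subset_span (by simp))) hnorm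
  exact ⟨h₁, h₂, ⟨β, hprod⟩⟩

/-- Let `n` be a squarefree integer, `n ≠ 1`, and let `a₁, a₂` be coprime
positive integers with `a₁a₂ + n = x²` for some integer `x`.  Then the ideals
`𝔞ᵢ = ⟨aᵢ, x + √n⟩` of the ring of integers of `ℚ(√n)` satisfy `𝒩(𝔞ᵢ) = aᵢ`, and the
product `𝔞₁𝔞₂` is principal. -/
theorem norm_of_explicit_ideals_of_diophantine_pair
    (n : ℤ) (hsf : Squarefree n) (hn : n ≠ 1)
    (K : Type*) [Field K] [NumberField K] (hK : finrank ℚ K = 2)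
    (σ : 𝓞 K) (hσ : σ ^ 2 = (n : 𝓞 K))
    (a₁ a₂ : ℕ) (ha₁ : 0 < a₁) (ha₂ : 0 < a₂) (hcop : Nat.Coprime a₁ a₂)
    (x : ℤ) (hx : (a₁ : ℤ) * a₂ + n = x ^ 2) :
    Ideal.absNorm (Ideal.span {(a₁ : 𝓞 K), (x : 𝓞 K) + σ}) = a₁ ∧
    Ideal.absNorm (Ideal.span {(a₂ : 𝓞 K), (x : 𝓞 K) + σ}) = a₂ ∧
    (Ideal.span {(a₁ : 𝓞 K), (x : 𝓞 K) + σ} *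
      Ideal.span {(a₂ : 𝓞 K), (x : 𝓞 K) + σ}).IsPrincipal :=
  norm_of_explicit_ideals_of_diophantine_pair_general n hsf hn K hK σ hσ a₁ a₂ hcop x hx
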